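/- (Theorem 4.1, part 2: Lax–Friedrichs entropy set for a convex scalar conservation law.) Let f : ℝ → ℝ be C² with f''(u) > 0 for every u, let u_* satisfy f'(u_*) = 0, fix M > 0 and u_B ∈ [−M, M], and let λ > 0, Q ∈ (0,1) satisfy (λ/Q)·sup_{|w| ≤ 8M} |f'(w)| ≤ 1. For a convex entropy pair (U,F) set G(v,w) = ½(F(v) + F(w)) − (Q/λ)(U(w) − U(v)). Define E_Lax^entropy(u_B) = { u₀ ∈ ℝ : there exists v₁ ∈ [−M, M] such that G(u_B, v₁) ≥ F(u₀) for every convex entropy pair (U,F) }. Then E_Lax^entropy(u_B) ∩ [−M, M] = E^Riemann(u_B) ∩ [−M, M], where E^Riemann(u_B) = (−∞, u_B^*] ∪ {u_B} if u_B > u_* (u_B^* < u_* being the unique other solution of f(u_B^*) = f(u_B)), and E^Riemann(u_B) = (−∞, u_*] if u_B ≤ u_*. -/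

import Mathlib

/-- The set of admissible boundary values based on the discrete entropy
inequalities of the Lax–Friedrichs scheme with numerical entropy flux
`G(v,w) = ½(F(v)+F(w)) − (Q/λ)(U(w)−U(v))`: `u₀` is admissible iff there
exists `v₁ ∈ [−M,M]` such that `G(u_B, v₁) ≥ F(u₀)` for every convex entropy
pair `(U,F)` (`U` of class C² with `U'' ≥ 0`, `F` differentiable with
`F' = U' f'`). -/
def laxEntropySet (f : ℝ → ℝ) (lam Q M uB : ℝ) : Set ℝ :=
  { u₀ : ℝ | ∃ v₁ ∈ Set.Icc (-M) M, ∀ U F : ℝ → ℝ, ContDiff ℝ 2 U →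
      (∀ u, 0 ≤ deriv (deriv U) u) → Differentiable ℝ F →
      (∀ u, deriv F u = deriv U u * deriv f u) →
      F u₀ ≤ (F uB + F v₁) / 2 - Q / lam * (U v₁ - U uB) }

/-
Every C² convex entropy pair `(U, F)` of the flux `f` splits on `[a, b]` as `U'(a)` times the
trivial pair `(u, f u)` plus a superposition, with weight `U''(t) ≥ 0`, of the Kruzhkov pairs
`(max u t, f (max u t))`, `t ∈ [a, b]`. Hence the Lax–Friedrichs entropy inequalities for all
convex pairs are equivalent to the conservation equality for `(u, f u)` together with the Kruzhkov
inequalities at every level `t ∈ [-M, M]`: if the Kruzhkov defect `K` is positive somewhere, the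
pair with `U'' = K⁺` has defect `∫ K⁺ K > 0`.

The CFL condition makes `f` `Q/λ`-Lipschitz on `[-M, M]`. Testing the Kruzhkov inequalities at
the levels `min u₀ u_B` and `max u₀ u_B` against the conservation equality traps `v₁` between
`u₀` and `u_B`; then `u₀ > u_*` forces `u₀ = u_B` (level `max v₁ u_*`), while `u₀ < u_B` forces
`f u_B ≤ f u₀`. Conversely, for such `u₀` the intermediate value theorem yields `v₁`, and the
convexity of `f` (or its monotonicity left of `u_*`) gives the Kruzhkov inequalities.
-/

open Set intervalIntegral

/-- `lfDefect U F (Q / λ) u₀ u_B v ≤ 0` is the discrete entropy inequality `G(u_B, v) ≥ F(u₀)`. -/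
noncomputable def lfDefect (U F : ℝ → ℝ) (α u₀ uB v : ℝ) : ℝ :=
  F u₀ - ((F uB + F v) / 2 - α * (U v - U uB))

section EntropyPairs

variable {f U F : ℝ → ℝ}

theorem integral_mul_apply_max_sub {w g : ℝ → ℝ} (hw : Continuous w) (hg : Continuous g)
    {a b x : ℝ} (hax : a ≤ x) (hxb : x ≤ b) :
    ∫ t in a..b, w t * (g (max x t) - g t) = ∫ t in a..x, w t * (g x - g t) := by
  have hint : Continuous fun t => w t * (g (max x t) - g t) := by fun_prop
  rw [← integral_add_adjacent_intervals (hint.intervalIntegrable a x)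
    (hint.intervalIntegrable x b)]
  have hzero : ∫ t in x..b, w t * (g (max x t) - g t) = 0 := by
    refine (integral_congr (g := fun _ => 0) fun t ht => ?_).trans integral_zero
    rw [uIcc_of_le hxb] at ht
    simp [max_eq_right ht.1]
  rw [hzero, add_zero]
  refine integral_congr fun t ht => ?_
  rw [uIcc_of_le hax] at ht
  simp only [max_eq_left ht.2]

theorem entropyFlux_sub_eq_integral (hf : ContDiff ℝ 1 f) (hU : ContDiff ℝ 2 U)
    (hF : Differentiable ℝ F) (hF' : ∀ u, deriv F u = deriv U u * deriv f u)
    {a b x : ℝ} (hax : a ≤ x) (hxb : x ≤ b) :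
    F x - F a = deriv U a * (f x - f a)
      + ∫ t in a..b, deriv (deriv U) t * (f (max x t) - f t) := by
  have hU' : ContDiff ℝ 1 (deriv U) := hU.deriv'
  have hf'c := hf.continuous_deriv le_rfl
  have hU''c := hU'.continuous_deriv le_rfl
  have hFTC : F x - F a = ∫ t in a..x, deriv U t * deriv f t := by
    simp_rw [← hF']
    refine (integral_deriv_eq_sub (fun t _ => hF t) ?_).symm
    rw [funext hF']
    exact ((hU.continuous_deriv one_le_two).mul hf'c).intervalIntegrable a x
  have hparts := integral_mul_deriv_eq_deriv_mul (a := a) (b := x) (u := deriv U)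
    (v := fun t => f t - f x) (u' := deriv (deriv U)) (v' := deriv f)
    (fun t _ => ((hU'.differentiable one_ne_zero) t).hasDerivAt)
    (fun t _ => ((hf.differentiable one_ne_zero) t).hasDerivAt.sub_const (f x))
    (hU''c.intervalIntegrable _ _) (hf'c.intervalIntegrable _ _)
  have hflip : ∫ t in a..x, deriv (deriv U) t * (f x - f t)
      = -∫ t in a..x, deriv (deriv U) t * (f t - f x) := by
    rw [← integral_neg]
    congr 1; ext t; ring
  rw [integral_mul_apply_max_sub hU''c hf.continuous hax hxb, hflip, hFTC, hparts]
  ring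

theorem integral_mul_lfDefect {w : ℝ → ℝ} {P Φ : ℝ → ℝ → ℝ} (hw : Continuous w)
    (hP : ∀ x, Continuous fun t => P t x) (hΦ : ∀ x, Continuous fun t => Φ t x)
    (a b α u₀ uB v : ℝ) :
    ∫ t in a..b, w t * lfDefect (P t) (Φ t) α u₀ uB v
      = lfDefect (fun x => ∫ t in a..b, w t * P t x) (fun x => ∫ t in a..b, w t * Φ t x)
          α u₀ uB v := by
  simp only [lfDefect]
  rw [← integral_sub, ← integral_const_mul, ← integral_add, ← integral_div, ← integral_sub,
    ← integral_sub]
  · congr 1; ext t; ring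
  all_goals apply Continuous.intervalIntegrable; fun_prop

theorem lfDefect_eq_add_integral_kruzhkov (hf : ContDiff ℝ 1 f) (hU : ContDiff ℝ 2 U)
    (hF : Differentiable ℝ F) (hF' : ∀ u, deriv F u = deriv U u * deriv f u)
    {a b u₀ uB v : ℝ} (α : ℝ) (h₀ : u₀ ∈ Icc a b) (hB : uB ∈ Icc a b) (hv : v ∈ Icc a b) :
    lfDefect U F α u₀ uB v = deriv U a * lfDefect id f α u₀ uB v
      + ∫ t in a..b, deriv (deriv U) t * lfDefect id f α (max u₀ t) (max uB t) (max v t) := by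
  have hkr : ∀ t, lfDefect id f α (max u₀ t) (max uB t) (max v t)
      = lfDefect (fun x => max x t - t) (fun x => f (max x t) - f t) α u₀ uB v := by
    intro t; simp only [lfDefect, id]; ring
  have hfc := hf.continuous
  simp_rw [hkr]
  rw [integral_mul_lfDefect ((hU.deriv' (n := 1)).continuous_deriv le_rfl) (by fun_prop)
    (by fun_prop)]
  have hid : ∀ u, deriv U u = deriv U u * deriv id u := by simp
  have rU := fun {x} (hx : x ∈ Icc a b) =>
    entropyFlux_sub_eq_integral contDiff_id hU (hU.differentiable two_ne_zero) hid hx.1 hx.2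
  have rF := fun {x} (hx : x ∈ Icc a b) => entropyFlux_sub_eq_integral hf hU hF hF' hx.1 hx.2
  simp only [lfDefect, id] at rU rF ⊢
  linear_combination rF h₀ - rF hB / 2 - rF hv / 2 + α * (rU hv - rU hB)

theorem exists_entropyPair_deriv_deriv_eq (hf : ContDiff ℝ 1 f) {w : ℝ → ℝ}
    (hw : Continuous w) :
    ∃ U F : ℝ → ℝ, ContDiff ℝ 2 U ∧ deriv (deriv U) = w ∧ Differentiable ℝ F ∧
      ∀ u, deriv F u = deriv U u * deriv f u := by
  set U₁ : ℝ → ℝ := fun x => ∫ s in (0 : ℝ)..x, w s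
  have hU₁ : ∀ x, HasDerivAt U₁ (w x) x :=
    fun x => (hw.integral_hasStrictDerivAt 0 x).hasDerivAt
  have hU₁c : Continuous U₁ := continuous_iff_continuousAt.mpr fun x => (hU₁ x).continuousAt
  have hU : ∀ x, HasDerivAt (fun x => ∫ s in (0 : ℝ)..x, U₁ s) (U₁ x) x :=
    fun x => (hU₁c.integral_hasStrictDerivAt 0 x).hasDerivAt
  have hF : ∀ x, HasDerivAt (fun x => ∫ s in (0 : ℝ)..x, U₁ s * deriv f s)
      (U₁ x * deriv f x) x :=
    fun x => ((hU₁c.mul (hf.continuous_deriv le_rfl)).integral_hasStrictDerivAt 0 x).hasDerivAt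
  have hU' : deriv (fun x => ∫ s in (0 : ℝ)..x, U₁ s) = U₁ := funext fun x => (hU x).deriv
  have hU'' : deriv U₁ = w := funext fun x => (hU₁ x).deriv
  refine ⟨_, _, ?_, by rw [hU', hU''], fun x => (hF x).differentiableAt,
    fun x => by rw [hU', (hF x).deriv]⟩
  rw [show (2 : WithTop ℕ∞) = 1 + 1 from rfl, contDiff_succ_iff_deriv, hU',
    contDiff_one_iff_deriv, hU'']
  exact ⟨fun x => (hU x).differentiableAt, by simp, fun x => (hU₁ x).differentiableAt, hw⟩

end EntropyPairs

/-- The Kruzhkov pair at level `t` is `(max · t, f (max · t))`, whose defect at `(u₀, u_B, v)` is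
the defect of `(id, f)` at the clipped states `(max u₀ t, max u_B t, max v t)`. -/
def KruzhkovAdmissible (f : ℝ → ℝ) (α a b u₀ uB v : ℝ) : Prop :=
  lfDefect id f α u₀ uB v = 0 ∧
    ∀ t ∈ Icc a b, lfDefect id f α (max u₀ t) (max uB t) (max v t) ≤ 0

section EntropyCondition

variable {f U F : ℝ → ℝ} {α a b u₀ uB v : ℝ}

theorem KruzhkovAdmissible.lfDefect_nonpos (hadm : KruzhkovAdmissible f α a b u₀ uB v)
    (hf : ContDiff ℝ 1 f) (hU : ContDiff ℝ 2 U) (hU'' : ∀ u, 0 ≤ deriv (deriv U) u)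
    (hF : Differentiable ℝ F) (hF' : ∀ u, deriv F u = deriv U u * deriv f u)
    (h₀ : u₀ ∈ Icc a b) (hB : uB ∈ Icc a b) (hv : v ∈ Icc a b) :
    lfDefect U F α u₀ uB v ≤ 0 := by
  rw [lfDefect_eq_add_integral_kruzhkov hf hU hF hF' α h₀ hB hv, hadm.1, mul_zero, zero_add]
  rw [← neg_nonneg, ← integral_neg]
  exact integral_nonneg (h₀.1.trans h₀.2) fun t ht =>
    neg_nonneg.mpr (mul_nonpos_of_nonneg_of_nonpos (hU'' t) (hadm.2 t ht))

theorem kruzhkovAdmissible_of_forall_lfDefect_nonpos (hf : ContDiff ℝ 1 f)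
    (H : ∀ U F : ℝ → ℝ, ContDiff ℝ 2 U → (∀ u, 0 ≤ deriv (deriv U) u) → Differentiable ℝ F →
      (∀ u, deriv F u = deriv U u * deriv f u) → lfDefect U F α u₀ uB v ≤ 0)
    (h₀ : u₀ ∈ Icc a b) (hB : uB ∈ Icc a b) (hv : v ∈ Icc a b) :
    KruzhkovAdmissible f α a b u₀ uB v := by
  have hf1 : Differentiable ℝ f := hf.differentiable one_ne_zero
  have hconserv : lfDefect id f α u₀ uB v = 0 := by
    have hpos := H id f contDiff_id (by simp) hf1 (by simp)
    have hneg := H (fun x => -x) (fun x => -f x) contDiff_neg (by simp) hf1.neg (by simp)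
    simp only [lfDefect, id] at hpos hneg ⊢
    linarith
  set K : ℝ → ℝ := fun s => lfDefect id f α (max u₀ s) (max uB s) (max v s)
  refine ⟨hconserv, fun t ht => not_lt.mp fun (hKt : 0 < K t) => ?_⟩
  have hK : Continuous K := by have := hf1.continuous; unfold K lfDefect; fun_prop
  have hKa : K a = 0 := by
    simp only [K, max_eq_left h₀.1, max_eq_left hB.1, max_eq_left hv.1, hconserv]
  have hat : a < t := lt_of_le_of_ne ht.1 fun h => by rw [← h, hKa] at hKt; exact hKt.false
  set w : ℝ → ℝ := fun s => max (K s) 0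
  have hw : Continuous w := hK.max continuous_const
  obtain ⟨U, F, hU, hU'', hF, hF'⟩ := exists_entropyPair_deriv_deriv_eq hf hw
  have hdef := H U F hU (by simp [hU'', w]) hF hF'
  rw [lfDefect_eq_add_integral_kruzhkov hf hU hF hF' α h₀ hB hv, hconserv, mul_zero, zero_add,
    hU''] at hdef
  refine hdef.not_gt (integral_pos (hat.trans_le ht.2) (hw.mul hK).continuousOn (fun s _ => ?_)
    ⟨t, ht, mul_pos (lt_max_of_lt_left hKt) hKt⟩)
  rcases le_total 0 (K s) with hs | hs
  · exact mul_nonneg (le_max_of_le_left hs) hs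
  · simp [w, max_eq_right hs]

theorem mem_laxEntropySet_iff (hf : ContDiff ℝ 1 f) {lam Q M : ℝ}
    (h₀ : u₀ ∈ Icc (-M) M) (hB : uB ∈ Icc (-M) M) :
    u₀ ∈ laxEntropySet f lam Q M uB ↔
      ∃ v ∈ Icc (-M) M, KruzhkovAdmissible f (Q / lam) (-M) M u₀ uB v := by
  refine exists_congr fun v => and_congr_right fun hv => ⟨fun H => ?_, fun hadm => ?_⟩
  · exact kruzhkovAdmissible_of_forall_lfDefect_nonpos hf
      (fun U F hU hU'' hF hF' => sub_nonpos.mpr (H U F hU hU'' hF hF')) h₀ hB hv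
  · exact fun U F hU hU'' hF hF' =>
      sub_nonpos.mp (hadm.lfDefect_nonpos hf hU hU'' hF hF' h₀ hB hv)

end EntropyCondition

section LipschitzFlux

variable {f : ℝ → ℝ} {α a b u₀ uB v : ℝ}
  (hLip : ∀ x ∈ Icc a b, ∀ y ∈ Icc a b, x ≤ y → |f y - f x| ≤ α * (y - x))
include hLip

theorem kruzhkovAdmissible_of_convexOn (hconv : ConvexOn ℝ (Icc a b) f) (h₀ : u₀ ∈ Icc a b)
    (hB : uB ∈ Icc a b) (h₀v : u₀ ≤ v) (hvB : v ≤ uB) (hφ : lfDefect id f α u₀ uB v = 0) :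
    KruzhkovAdmissible f α a b u₀ uB v := by
  have hv : v ∈ Icc a b := ⟨h₀.1.trans h₀v, hvB.trans hB.2⟩
  have hLvB := abs_le.mp (hLip v hv uB hB hvB)
  refine ⟨hφ, fun t ht => ?_⟩
  simp only [lfDefect, id] at hφ ⊢
  rcases le_total t u₀ with htu | hut
  · rw [max_eq_left htu, max_eq_left (htu.trans (h₀v.trans hvB)), max_eq_left (htu.trans h₀v)]
    linarith
  rcases le_total t v with htv | hvt
  · have hft := hconv.le_on_segment h₀ hv (by rw [segment_eq_Icc h₀v]; exact ⟨hut, htv⟩)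
    have hfv : f v ≤ f u₀ := by linarith
    rw [max_eq_right hut, max_eq_left (htv.trans hvB), max_eq_left htv]
    linarith [hft.trans (max_le le_rfl hfv)]
  rcases le_total t uB with htB | hBt
  · have hLtB := abs_le.mp (hLip t ht uB hB htB)
    rw [max_eq_right hut, max_eq_left htB, max_eq_right hvt]
    linarith
  · rw [max_eq_right hut, max_eq_right hBt, max_eq_right hvt]
    linarith [show α * (t - t) = 0 by ring]

theorem kruzhkovAdmissible_of_antitoneOn (hanti : AntitoneOn f (Icc uB u₀))
    (hB : uB ∈ Icc a b) (hBv : uB ≤ v) (hv₀ : v ≤ u₀) (hφ : lfDefect id f α u₀ uB v = 0) :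
    KruzhkovAdmissible f α a b u₀ uB v := by
  refine ⟨hφ, fun t ht => ?_⟩
  simp only [lfDefect, id] at hφ ⊢
  rcases le_total t uB with htB | hBt
  · rw [max_eq_left (htB.trans (hBv.trans hv₀)), max_eq_left htB, max_eq_left (htB.trans hBv)]
    linarith
  rcases le_total t v with htv | hvt
  · have hLBt := abs_le.mp (hLip uB hB t ht hBt)
    rw [max_eq_left (htv.trans hv₀), max_eq_right hBt, max_eq_left htv]
    linarith
  rcases le_total t u₀ with ht₀ | h₀t
  · have hft := hanti ⟨hBv.trans hvt, ht₀⟩ ⟨hBv.trans hv₀, le_rfl⟩ ht₀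
    rw [max_eq_left ht₀, max_eq_right hBt, max_eq_right hvt]
    linarith [show α * (t - t) = 0 by ring]
  · rw [max_eq_right h₀t, max_eq_right hBt, max_eq_right hvt]
    linarith [show α * (t - t) = 0 by ring]

theorem exists_kruzhkovAdmissible_of_convexOn (hfc : Continuous f)
    (hconv : ConvexOn ℝ (Icc a b) f) (h₀ : u₀ ∈ Icc a b) (hB : uB ∈ Icc a b) (h₀B : u₀ ≤ uB)
    (hf : f uB ≤ f u₀) :
    ∃ v ∈ Icc a b, KruzhkovAdmissible f α a b u₀ uB v := by
  have hL := abs_le.mp (hLip u₀ h₀ uB hB h₀B)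
  obtain ⟨v, hv, hφ⟩ := intermediate_value_Icc h₀B
    (f := fun v => lfDefect id f α u₀ uB v) (by unfold lfDefect; fun_prop)
    (show (0 : ℝ) ∈ Icc (lfDefect id f α u₀ uB u₀) (lfDefect id f α u₀ uB uB) by
      simp only [lfDefect, id, sub_self, mul_zero, mem_Icc]
      constructor <;> linarith [show α * (u₀ - uB) = -(α * (uB - u₀)) by ring])
  exact ⟨v, ⟨h₀.1.trans hv.1, hv.2.trans hB.2⟩,
    kruzhkovAdmissible_of_convexOn hLip hconv h₀ hB hv.1 hv.2 hφ⟩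

theorem exists_kruzhkovAdmissible_of_antitoneOn (hfc : Continuous f)
    (hanti : AntitoneOn f (Icc uB u₀)) (h₀ : u₀ ∈ Icc a b) (hB : uB ∈ Icc a b) (hB₀ : uB ≤ u₀) :
    ∃ v ∈ Icc a b, KruzhkovAdmissible f α a b u₀ uB v := by
  have hL := abs_le.mp (hLip uB hB u₀ h₀ hB₀)
  have hf : f u₀ ≤ f uB := hanti ⟨le_rfl, hB₀⟩ ⟨hB₀, le_rfl⟩ hB₀
  obtain ⟨v, hv, hφ⟩ := intermediate_value_Icc hB₀
    (f := fun v => lfDefect id f α u₀ uB v) (by unfold lfDefect; fun_prop)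
    (show (0 : ℝ) ∈ Icc (lfDefect id f α u₀ uB uB) (lfDefect id f α u₀ uB u₀) by
      simp only [lfDefect, id, sub_self, mul_zero, mem_Icc]
      constructor <;> linarith)
  exact ⟨v, ⟨hB.1.trans hv.1, hv.2.trans h₀.2⟩,
    kruzhkovAdmissible_of_antitoneOn hLip hanti hB hv.1 hv.2 hφ⟩

theorem eq_of_lfDefect_self_eq_zero (hα : 0 < α) (h₀ : u₀ ∈ Icc a b) (hB : uB ∈ Icc a b)
    (hφ : lfDefect id f α u₀ uB u₀ = 0) : u₀ = uB := by
  simp only [lfDefect, id] at hφ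
  rcases lt_trichotomy u₀ uB with h | h | h
  · have hL := abs_le.mp (hLip u₀ h₀ uB hB h.le)
    linarith [mul_pos hα (sub_pos.2 h)]
  · exact h
  · have hL := abs_le.mp (hLip uB hB u₀ h₀ h.le)
    linarith [mul_pos hα (sub_pos.2 h)]

namespace KruzhkovAdmissible

variable (hadm : KruzhkovAdmissible f α a b u₀ uB v) (hα : 0 < α)
  (h₀ : u₀ ∈ Icc a b) (hB : uB ∈ Icc a b) (hv : v ∈ Icc a b)
include hadm hα h₀ hB hv

theorem min_le : min u₀ uB ≤ v := by
  by_contra! hlt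
  have hs : min u₀ uB ∈ Icc a b := ⟨le_min h₀.1 hB.1, (min_le_left _ _).trans h₀.2⟩
  have hKs := hadm.2 _ hs
  have hφ := hadm.1
  have hL := abs_le.mp (hLip v hv _ hs hlt.le)
  rw [max_eq_left (min_le_left _ _), max_eq_left (min_le_right _ _), max_eq_right hlt.le] at hKs
  simp only [lfDefect, id] at hKs hφ
  linarith [mul_pos hα (sub_pos.2 hlt)]

theorem le_max : v ≤ max u₀ uB := by
  by_contra! hlt
  have hs : max u₀ uB ∈ Icc a b := ⟨h₀.1.trans (le_max_left _ _), max_le h₀.2 hB.2⟩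
  have hKs := hadm.2 _ hs
  have hL := abs_le.mp (hLip _ hs v hv hlt.le)
  rw [max_eq_right (le_max_left _ _), max_eq_right (le_max_right _ _), max_eq_left hlt.le] at hKs
  simp only [lfDefect, id] at hKs
  linarith [mul_pos hα (sub_pos.2 hlt)]

theorem apply_le_of_lt (h : u₀ < uB) : f uB ≤ f u₀ := by
  have hvB : v ≤ uB := (hadm.le_max hLip hα h₀ hB hv).trans (max_eq_right h.le).le
  have hL := abs_le.mp (hLip v hv uB hB hvB)
  have hφ := hadm.1
  simp only [lfDefect, id] at hφ
  linarith

theorem eq_of_lt {c : ℝ} (hmono : StrictMonoOn f (Ici c)) (hc : c < u₀) : u₀ = uB := by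
  rcases lt_trichotomy v u₀ with hv₀ | rfl | h₀v
  · exfalso
    have hBv : uB ≤ v :=
      (min_le_iff.mp (hadm.min_le hLip hα h₀ hB hv)).resolve_left (not_le.mpr hv₀)
    have hs : max v c ∈ Icc a b := ⟨hv.1.trans (le_max_left _ _), (max_lt hv₀ hc).le.trans h₀.2⟩
    have hs₀ : max v c < u₀ := max_lt hv₀ hc
    have hKs := hadm.2 _ hs
    rw [max_eq_left hs₀.le, max_eq_right (hBv.trans (le_max_left _ _)),
      max_eq_right (le_max_left _ _)] at hKs
    have hfs : f (max v c) < f u₀ := hmono (le_max_right v c) hc.le hs₀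
    simp only [lfDefect, id] at hKs
    linarith [show α * (max v c - max v c) = 0 by ring]
  · exact eq_of_lfDefect_self_eq_zero hLip hα h₀ hB hadm.1
  · exfalso
    have hvB : v ≤ uB :=
      (le_max_iff.mp (hadm.le_max hLip hα h₀ hB hv)).resolve_left (not_le.mpr h₀v)
    have hf₀v : f u₀ < f v := hmono hc.le (hc.le.trans h₀v.le) h₀v
    have hfvB : f v ≤ f uB :=
      hmono.monotoneOn (hc.le.trans h₀v.le) (hc.le.trans (h₀v.le.trans hvB)) hvB
    have hφ := hadm.1
    simp only [lfDefect, id] at hφ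
    linarith [mul_nonpos_of_nonneg_of_nonpos hα.le (sub_nonpos.2 hvB)]

end KruzhkovAdmissible

end LipschitzFlux

section RiemannSet

variable {f : ℝ → ℝ} {α a b c u₀ uB : ℝ}
  (hLip : ∀ x ∈ Icc a b, ∀ y ∈ Icc a b, x ≤ y → |f y - f x| ≤ α * (y - x))
  (hα : 0 < α) (hfc : Continuous f) (hconv : ConvexOn ℝ (Icc a b) f)
  (hanti : StrictAntiOn f (Iic c)) (hmono : StrictMonoOn f (Ici c))
  (h₀ : u₀ ∈ Icc a b) (hB : uB ∈ Icc a b)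
include hLip hα hfc hconv hanti hmono h₀ hB

theorem exists_kruzhkovAdmissible_iff_of_lt (hcB : c < uB) {uB' : ℝ} (hB'c : uB' < c)
    (hfB' : f uB' = f uB) :
    (∃ v ∈ Icc a b, KruzhkovAdmissible f α a b u₀ uB v) ↔ u₀ ≤ uB' ∨ u₀ = uB := by
  constructor
  · rintro ⟨v, hv, hadm⟩
    rcases le_or_gt u₀ c with h₀c | hc₀
    · have hle := hadm.apply_le_of_lt hLip hα h₀ hB hv (h₀c.trans_lt hcB)
      exact Or.inl ((hanti.le_iff_ge hB'c.le h₀c).mp (hfB' ▸ hle))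
    · exact Or.inr (hadm.eq_of_lt hLip hα h₀ hB hv hmono hc₀)
  · rintro (h | rfl)
    · exact exists_kruzhkovAdmissible_of_convexOn hLip hfc hconv h₀ hB
        (h.trans (hB'c.trans hcB).le) (hfB' ▸ hanti.antitoneOn (h.trans hB'c.le) hB'c.le h)
    · exact exists_kruzhkovAdmissible_of_convexOn hLip hfc hconv h₀ h₀ le_rfl le_rfl

theorem exists_kruzhkovAdmissible_iff_of_le (hBc : uB ≤ c) :
    (∃ v ∈ Icc a b, KruzhkovAdmissible f α a b u₀ uB v) ↔ u₀ ≤ c := by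
  constructor
  · rintro ⟨v, hv, hadm⟩
    by_contra! hc₀
    exact hBc.not_gt (hadm.eq_of_lt hLip hα h₀ hB hv hmono hc₀ ▸ hc₀)
  · intro h₀c
    rcases le_total u₀ uB with h | h
    · exact exists_kruzhkovAdmissible_of_convexOn hLip hfc hconv h₀ hB h
        (hanti.antitoneOn h₀c hBc h)
    · exact exists_kruzhkovAdmissible_of_antitoneOn hLip hfc
        (hanti.antitoneOn.mono fun x hx => hx.2.trans h₀c) h₀ hB h

end RiemannSet

section ConvexFlux

variable {f : ℝ → ℝ}

theorem abs_sub_le_of_cfl (hf : ContDiff ℝ 1 f) {lam Q M : ℝ} (hlam : 0 < lam) (hQ : 0 < Q)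
    (hCFL : lam / Q * sSup ((fun w => |deriv f w|) '' Icc (-(8 * M)) (8 * M)) ≤ 1) :
    ∀ x ∈ Icc (-M) M, ∀ y ∈ Icc (-M) M, x ≤ y → |f y - f x| ≤ Q / lam * (y - x) := by
  set S := (fun w => |deriv f w|) '' Icc (-(8 * M)) (8 * M)
  have hS : BddAbove S := (isCompact_Icc.image (hf.continuous_deriv le_rfl).abs).bddAbove
  have hbound : ∀ w ∈ Icc (-M) M, ‖deriv f w‖ ≤ Q / lam := fun w hw =>
    calc ‖deriv f w‖ = |deriv f w| := Real.norm_eq_abs _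
      _ ≤ sSup S := le_csSup hS ⟨w, ⟨by linarith [hw.1, hw.2], by linarith [hw.1, hw.2]⟩, rfl⟩
      _ = Q / lam * (lam / Q * sSup S) := by field_simp
      _ ≤ Q / lam := mul_le_of_le_one_right (div_pos hQ hlam).le hCFL
  intro x hx y hy hxy
  simpa only [Real.norm_eq_abs, abs_of_nonneg (sub_nonneg.2 hxy)] using
    (convex_Icc _ _).norm_image_sub_le_of_norm_deriv_le
      (fun z _ => (hf.differentiable one_ne_zero).differentiableAt) hbound hx hy

theorem strictAntiOn_Iic_of_deriv_eq_zero (hf : Differentiable ℝ f)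
    (hf' : StrictMono (deriv f)) {c : ℝ} (hc : deriv f c = 0) : StrictAntiOn f (Iic c) :=
  strictAntiOn_of_deriv_neg (convex_Iic c) hf.continuous.continuousOn fun x hx => by
    rw [interior_Iic] at hx
    exact hc ▸ hf' hx

theorem strictMonoOn_Ici_of_deriv_eq_zero (hf : Differentiable ℝ f)
    (hf' : StrictMono (deriv f)) {c : ℝ} (hc : deriv f c = 0) : StrictMonoOn f (Ici c) :=
  strictMonoOn_of_deriv_pos (convex_Ici c) hf.continuous.continuousOn fun x hx => by
    rw [interior_Ici] at hx
    exact hc ▸ hf' hx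

end ConvexFlux

theorem laxEntropySet_eq_riemannSet_general
    (f : ℝ → ℝ) (hf : ContDiff ℝ 2 f) (hf'' : ∀ u, 0 < deriv (deriv f) u)
    (ustar : ℝ) (hstar : deriv f ustar = 0)
    (M : ℝ) (uB : ℝ) (huB : uB ∈ Set.Icc (-M) M)
    (lam Q : ℝ) (hlam : 0 < lam) (hQ : Q ∈ Set.Ioo (0 : ℝ) 1)
    (hCFL : lam / Q * sSup ((fun w => |deriv f w|) '' Set.Icc (-(8 * M)) (8 * M)) ≤ 1) :
    (ustar < uB → ∀ uBstar : ℝ, uBstar < ustar → f uBstar = f uB →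
      laxEntropySet f lam Q M uB ∩ Set.Icc (-M) M
        = (Set.Iic uBstar ∪ {uB}) ∩ Set.Icc (-M) M) ∧
    (uB ≤ ustar →
      laxEntropySet f lam Q M uB ∩ Set.Icc (-M) M
        = Set.Iic ustar ∩ Set.Icc (-M) M) := by
  have hf1 : ContDiff ℝ 1 f := hf.of_le one_le_two
  have hfd : Differentiable ℝ f := hf.differentiable two_ne_zero
  have hf' : StrictMono (deriv f) := strictMono_of_deriv_pos hf''
  have hLip := abs_sub_le_of_cfl hf1 hlam hQ.1 hCFL
  have hα : 0 < Q / lam := div_pos hQ.1 hlam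
  have hconv : ConvexOn ℝ (Icc (-M) M) f :=
    (hf'.monotone.convexOn_univ_of_deriv hfd).subset (subset_univ _) (convex_Icc _ _)
  have hanti := strictAntiOn_Iic_of_deriv_eq_zero hfd hf' hstar
  have hmono := strictMonoOn_Ici_of_deriv_eq_zero hfd hf' hstar
  refine ⟨fun hcB uBstar hB'c hfB' => ?_, fun hBc => ?_⟩ <;> ext u₀ <;>
    refine and_congr_left fun h₀ => (mem_laxEntropySet_iff hf1 h₀ huB).trans ?_
  · exact exists_kruzhkovAdmissible_iff_of_lt hLip hα hfd.continuous hconv hanti hmono h₀ huB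
      hcB hB'c hfB'
  · exact exists_kruzhkovAdmissible_iff_of_le hLip hα hfd.continuous hconv hanti hmono h₀ huB hBc

/-- Theorem 4.1, part 2, Lax–Friedrichs entropy set: for a
strictly convex C² flux `f` with critical point `u_*`, `u_B ∈ [−M,M]` and CFL
condition `(λ/Q)·sup_{|w|≤8M}|f'(w)| ≤ 1`, the Lax–Friedrichs entropy set
intersected with `[−M,M]` equals `E^Riemann(u_B) ∩ [−M,M]`, where
`E^Riemann(u_B) = (−∞, u_B^*] ∪ {u_B}` if `u_B > u_*`, and `(−∞, u_*]` if
`u_B ≤ u_*`. -/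
theorem laxEntropySet_eq_riemannSet
    (f : ℝ → ℝ) (hf : ContDiff ℝ 2 f) (hf'' : ∀ u, 0 < deriv (deriv f) u)
    (ustar : ℝ) (hstar : deriv f ustar = 0)
    (M : ℝ) (hM : 0 < M) (uB : ℝ) (huB : uB ∈ Set.Icc (-M) M)
    (lam Q : ℝ) (hlam : 0 < lam) (hQ : Q ∈ Set.Ioo (0 : ℝ) 1)
    (hCFL : lam / Q * sSup ((fun w => |deriv f w|) '' Set.Icc (-(8 * M)) (8 * M)) ≤ 1) :
    (ustar < uB → ∀ uBstar : ℝ, uBstar < ustar → f uBstar = f uB →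
      laxEntropySet f lam Q M uB ∩ Set.Icc (-M) M
        = (Set.Iic uBstar ∪ {uB}) ∩ Set.Icc (-M) M) ∧
    (uB ≤ ustar →
      laxEntropySet f lam Q M uB ∩ Set.Icc (-M) M
        = Set.Iic ustar ∩ Set.Icc (-M) M) :=
  laxEntropySet_eq_riemannSet_general f hf hf'' ustar hstar M uB huB lam Q hlam hQ hCFL
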